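/- Let q be a prime power and let r ≥ 1 and δ ≥ 1 be integers. Then there exist a constant c and an integer n₀ such that for every n > n₀ one has 𝒞_q(n, n−δ, r) = c. -/

import Mathlib

open Module

/-- `coveringNumber F n k r` is the minimum number of `k`-dimensional `F`-linear subspaces
of `F^n` needed so that every `r`-dimensional subspace is contained in at least one of them. -/
noncomputable def coveringNumber (F : Type) [Field F] (n k r : ℕ) : ℕ :=
  sInf { m : ℕ | ∃ S : Finset (Submodule F (Fin n → F)),
    S.card = m ∧
    (∀ X ∈ S, finrank F X = k) ∧
    (∀ Y : Submodule F (Fin n → F), finrank F Y = r → ∃ X ∈ S, Y ≤ X) }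

/-!
Pulling a covering of `F^n` back along the coordinate projection `F^(n+1) → F^n`, whose kernel
is a line, raises the dimension of every block by one and still covers the `r`-dimensional
subspaces, since the image of such a subspace lies in some `r`-dimensional subspace of `F^n`.
Hence `n ↦ 𝒞_q(n, n - δ, r)` is a non-increasing sequence of natural numbers once `n ≥ r + δ`,
so it is eventually constant.
-/

variable {F V W : Type} [Field F] [AddCommGroup V] [Module F V] [AddCommGroup W] [Module F W]

namespace Submodule

theorem exists_finrank_eq [FiniteDimensional F V] {d : ℕ} (hd : d ≤ finrank F V) :
    ∃ X : Submodule F V, finrank F X = d := by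
  obtain ⟨v, hv⟩ := exists_linearIndependent_of_le_finrank hd
  exact ⟨span F (Set.range v), by rw [finrank_span_eq_card hv, Fintype.card_fin]⟩

theorem finrank_comap_of_surjective [FiniteDimensional F W] {f : W →ₗ[F] V}
    (hf : Function.Surjective f) (X : Submodule F V) :
    finrank F (X.comap f) = finrank F X + finrank F (LinearMap.ker f) := by
  have h := LinearMap.finrank_range_add_finrank_ker (f ∘ₗ (X.comap f).subtype)
  rw [LinearMap.range_comp, range_subtype, map_comap_eq_of_surjective hf,
    LinearMap.ker_comp] at h
  have hker : finrank F ((LinearMap.ker f).comap (X.comap f).subtype) =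
      finrank F (LinearMap.ker f) :=
    (comapSubtypeEquivOfLe (LinearMap.ker_le_comap f)).finrank_eq
  omega

theorem exists_le_finrank_eq [FiniteDimensional F V] (Y : Submodule F V) {k : ℕ}
    (hYk : finrank F Y ≤ k) (hk : k ≤ finrank F V) :
    ∃ X : Submodule F V, Y ≤ X ∧ finrank F X = k := by
  have hquot := Y.finrank_quotient_add_finrank
  obtain ⟨Z, hZ⟩ := exists_finrank_eq (F := F) (V := V ⧸ Y) (d := k - finrank F Y) (by omega)
  refine ⟨Z.comap Y.mkQ, by simpa using comap_mono (f := Y.mkQ) bot_le, ?_⟩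
  rw [finrank_comap_of_surjective Y.mkQ_surjective, ker_mkQ, hZ]
  omega

end Submodule

def IsSubspaceCovering (k r : ℕ) (S : Finset (Submodule F V)) : Prop :=
  (∀ X ∈ S, finrank F X = k) ∧ ∀ Y : Submodule F V, finrank F Y = r → ∃ X ∈ S, Y ≤ X

theorem coveringNumber_eq_sInf (n k r : ℕ) :
    coveringNumber F n k r =
      sInf {m | ∃ S : Finset (Submodule F (Fin n → F)), S.card = m ∧ IsSubspaceCovering k r S} :=
  rfl

theorem exists_isSubspaceCovering [Finite F] [FiniteDimensional F V] {k r : ℕ} (hrk : r ≤ k)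
    (hk : k ≤ finrank F V) : ∃ S : Finset (Submodule F V), IsSubspaceCovering k r S := by
  have : Finite V := Module.finite_of_finite F
  have : Finite (Submodule F V) := Finite.of_injective _ SetLike.coe_injective
  refine ⟨(Set.toFinite {X : Submodule F V | finrank F X = k}).toFinset,
    fun X hX => by simpa using hX, fun Y hY => ?_⟩
  obtain ⟨X, hYX, hX⟩ := Y.exists_le_finrank_eq (hY.trans_le hrk) hk
  exact ⟨X, by simpa using hX, hYX⟩

theorem IsSubspaceCovering.comap [FiniteDimensional F V] [FiniteDimensional F W] {k r : ℕ}
    {S : Finset (Submodule F V)} (hS : IsSubspaceCovering k r S) (hr : r ≤ finrank F V)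
    {f : W →ₗ[F] V} (hf : Function.Surjective f) :
    IsSubspaceCovering (k + finrank F (LinearMap.ker f)) r (S.image (Submodule.comap f)) := by
  classical
  refine ⟨fun X hX => ?_, fun Y hY => ?_⟩
  · obtain ⟨X, hXS, rfl⟩ := Finset.mem_image.mp hX
    rw [Submodule.finrank_comap_of_surjective hf, hS.1 X hXS]
  · obtain ⟨Z, hYZ, hZ⟩ := (Y.map f).exists_le_finrank_eq (hY ▸ Submodule.finrank_map_le f Y) hr
    obtain ⟨X, hXS, hZX⟩ := hS.2 Z hZ
    exact ⟨X.comap f, Finset.mem_image_of_mem _ hXS,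
      Submodule.map_le_iff_le_comap.mp (hYZ.trans hZX)⟩

theorem coveringNumber_succ_le [Finite F] {n δ r : ℕ} (h : r + δ ≤ n) :
    coveringNumber F (n + 1) (n + 1 - δ) r ≤ coveringNumber F n (n - δ) r := by
  classical
  let π : (Fin (n + 1) → F) →ₗ[F] (Fin n → F) := LinearMap.funLeft F F Fin.castSucc
  have hπ : Function.Surjective π :=
    LinearMap.funLeft_surjective_of_injective F F _ (Fin.castSucc_injective n)
  have hker : finrank F (LinearMap.ker π) = 1 := by
    have := LinearMap.finrank_range_add_finrank_ker π
    rw [LinearMap.range_eq_top.mpr hπ, finrank_top, finrank_fin_fun, finrank_fin_fun] at this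
    omega
  obtain ⟨S₀, hS₀⟩ := exists_isSubspaceCovering (F := F) (V := Fin n → F) (k := n - δ) (r := r)
    (by omega) (by rw [finrank_fin_fun]; omega)
  obtain ⟨S, hcard, hS⟩ := Nat.sInf_mem (s := {m | ∃ S : Finset (Submodule F (Fin n → F)),
    S.card = m ∧ IsSubspaceCovering (n - δ) r S}) ⟨_, S₀, rfl, hS₀⟩
  have hS' := hS.comap (by rw [finrank_fin_fun]; omega) hπ
  rw [hker, show n - δ + 1 = n + 1 - δ by omega] at hS'
  rw [coveringNumber_eq_sInf, coveringNumber_eq_sInf, ← hcard]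
  exact Nat.sInf_le ⟨_, Finset.card_image_of_injective _
    (Submodule.comap_injective_of_surjective hπ), hS'⟩

theorem Nat.exists_eventually_eq_of_succ_le {a : ℕ → ℕ} {N : ℕ}
    (ha : ∀ n, N ≤ n → a (n + 1) ≤ a n) :
    ∃ c n₀ : ℕ, ∀ n > n₀, a n = c := by
  have hanti : Antitone fun k => a (N + k) :=
    antitone_nat_of_succ_le fun k => ha (N + k) (Nat.le_add_right N k)
  obtain ⟨k₀, hk₀⟩ := WellFoundedLT.antitone_chain_condition hanti
  refine ⟨a (N + k₀), N + k₀, fun n hn => ?_⟩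
  simpa [show N + (n - N) = n by omega] using (hk₀ (n - N) (by omega)).symm

theorem eventually_constant_general (r δ : ℕ)
    (F : Type) [Field F] [Fintype F] :
    ∃ c n₀ : ℕ, ∀ n : ℕ, n > n₀ → coveringNumber F n (n - δ) r = c :=
  Nat.exists_eventually_eq_of_succ_le (N := r + δ) fun _ h => coveringNumber_succ_le h

/-- For fixed $r$ and $\delta$, the value $\mathcal{C}_q(n,n-\delta,r)$ is eventually constant. -/
theorem eventually_constant (q r δ : ℕ) (hq : IsPrimePow q)
    (hr : 1 ≤ r) (hδ : 1 ≤ δ)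
    (F : Type) [Field F] [Fintype F] (hF : Fintype.card F = q) :
    ∃ c n₀ : ℕ, ∀ n : ℕ, n > n₀ → coveringNumber F n (n - δ) r = c :=
  eventually_constant_general r δ F
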